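/- arXiv:1301.4629 — 2 statements merged into one kernel-verified Lean document; each statement's English description precedes it below -/
import Mathlib

section
/- Let G be a group with a normal subgroup H such that H is residually torsion-free nilpotent, G/H is torsion-free nilpotent, and G/[H,H] is nilpotent. Then G is residually torsion-free nilpotent. -/
/-!
Take `g ≠ 1` in `H` (otherwise `H` itself works), a normal `M ⊴ H` avoiding it with `H/M`
torsion-free nilpotent, and the normal core `T` of `M` in `G`. Torsion-freeness of `G/H` puts every
root of an element of `T` into `H`; torsion-freeness of `H/M`, applied to its conjugates, then puts
it into `T`. Nilpotency of `G/T` is P. Hall's criterion: `H/T` is nilpotent and `(G/T)/[H/T, H/T]`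
is a quotient of the nilpotent group `G/[H, H]`. Hall's criterion rests on the bound
`[γᵢ(N), G, …, G] ≤ γᵢ₊₁(N)` (with `d(i+1)` copies of `G`, if `γ_d(G) ≤ [N, N]`), proved by
expanding `[[X, Y], G, …, G]` with the three subgroups lemma.
-/

def Monoid.IsTorsionFree (G : Type*) [Monoid G] : Prop :=
  ∀ g : G, g ≠ 1 → ¬IsOfFinOrder g

def IsResiduallyTorsionFreeNilpotent (G : Type*) [Group G] : Prop :=
  ∀ g : G, g ≠ 1 → ∃ (N : Subgroup G) (_ : N.Normal),
    g ∉ N ∧ Monoid.IsTorsionFree (G ⧸ N) ∧ Group.IsNilpotent (G ⧸ N)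

namespace Subgroup

variable {G : Type*} [Group G]

theorem le_of_map_mk'_eq_bot {K S : Subgroup G} [K.Normal] (h : S.map (QuotientGroup.mk' K) = ⊥) :
    S ≤ K := by
  rwa [map_eq_bot_iff, QuotientGroup.ker_mk'] at h

theorem map_mk'_eq_bot_of_le {K S : Subgroup G} [K.Normal] (h : S ≤ K) :
    S.map (QuotientGroup.mk' K) = ⊥ := by
  rwa [map_eq_bot_iff, QuotientGroup.ker_mk']

theorem commutator_commutator_le_sup (X Y Z : Subgroup G) [X.Normal] [Y.Normal] [Z.Normal] :
    ⁅⁅X, Y⁆, Z⁆ ≤ ⁅⁅Y, Z⁆, X⁆ ⊔ ⁅⁅Z, X⁆, Y⁆ := by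
  apply le_of_map_mk'_eq_bot
  simp only [map_commutator]
  apply commutator_commutator_eq_bot_of_rotate <;>
    simp only [← map_commutator] <;> exact map_mk'_eq_bot_of_le (by simp)

theorem commutator_sup_le (A B C : Subgroup G) [A.Normal] [B.Normal] [C.Normal] :
    ⁅A ⊔ B, C⁆ ≤ ⁅A, C⁆ ⊔ ⁅B, C⁆ := by
  apply le_of_map_mk'_eq_bot
  rw [map_commutator, map_sup, commutator_eq_bot_iff_le_centralizer, sup_le_iff]
  simp only [← commutator_eq_bot_iff_le_centralizer, ← map_commutator]
  exact ⟨map_mk'_eq_bot_of_le le_sup_left, map_mk'_eq_bot_of_le le_sup_right⟩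

theorem exists_lowerCentralSeries_le_of_isNilpotent_quotient {K : Subgroup G} [K.Normal]
    (h : Group.IsNilpotent (G ⧸ K)) : ∃ d, (⊤ : Subgroup G).lowerCentralSeries d ≤ K := by
  obtain ⟨d, hd⟩ := nilpotent_iff_lowerCentralSeries.mp h
  refine ⟨d, le_of_map_mk'_eq_bot ?_⟩
  rw [map_lowerCentralSeries, map_top_of_surjective _ (QuotientGroup.mk'_surjective K), hd]

theorem commutator_lowerCentralSeries_le (N : Subgroup G) [N.Normal] (a b : ℕ) :
    ⁅N.lowerCentralSeries a, N.lowerCentralSeries b⁆ ≤ N.lowerCentralSeries (a + b + 1) := by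
  induction b generalizing a with
  | zero => exact le_rfl
  | succ b ih =>
    rw [lowerCentralSeries_succ, commutator_comm]
    refine (commutator_commutator_le_sup _ _ _).trans (sup_le ?_ ?_)
    · rw [commutator_comm N, ← lowerCentralSeries_succ,
        show a + (b + 1) + 1 = a + 1 + b + 1 by omega]
      exact ih (a + 1)
    · exact commutator_mono (ih a) le_rfl

def lowerCentralSeriesFrom (X : Subgroup G) (n : ℕ) : Subgroup G :=
  (fun K ↦ ⁅K, ⊤⁆)^[n] X

theorem lowerCentralSeriesFrom_succ (X : Subgroup G) (n : ℕ) :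
    X.lowerCentralSeriesFrom (n + 1) = ⁅X.lowerCentralSeriesFrom n, ⊤⁆ :=
  Function.iterate_succ_apply' _ n X

theorem lowerCentralSeriesFrom_succ' (X : Subgroup G) (n : ℕ) :
    X.lowerCentralSeriesFrom (n + 1) = lowerCentralSeriesFrom ⁅X, ⊤⁆ n := rfl

theorem lowerCentralSeriesFrom_add (X : Subgroup G) (m n : ℕ) :
    X.lowerCentralSeriesFrom (m + n) = (X.lowerCentralSeriesFrom n).lowerCentralSeriesFrom m :=
  Function.iterate_add_apply _ m n X

theorem lowerCentralSeriesFrom_top (n : ℕ) :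
    (⊤ : Subgroup G).lowerCentralSeriesFrom n = (⊤ : Subgroup G).lowerCentralSeries n := by
  induction n with
  | zero => rfl
  | succ n ih => rw [lowerCentralSeriesFrom_succ, ih, lowerCentralSeries_succ]

instance lowerCentralSeriesFrom_normal (X : Subgroup G) [X.Normal] (n : ℕ) :
    (X.lowerCentralSeriesFrom n).Normal := by
  induction n with
  | zero => assumption
  | succ n _ => rw [lowerCentralSeriesFrom_succ]; infer_instance

theorem lowerCentralSeriesFrom_mono {X Y : Subgroup G} (h : X ≤ Y) (n : ℕ) :
    X.lowerCentralSeriesFrom n ≤ Y.lowerCentralSeriesFrom n := by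
  induction n with
  | zero => exact h
  | succ n ih => simpa only [lowerCentralSeriesFrom_succ] using commutator_mono ih le_rfl

theorem lowerCentralSeriesFrom_le_self (X : Subgroup G) [X.Normal] (n : ℕ) :
    X.lowerCentralSeriesFrom n ≤ X := by
  induction n with
  | zero => exact le_rfl
  | succ n ih => rw [lowerCentralSeriesFrom_succ]; exact (commutator_le_left _ _).trans ih

theorem lowerCentralSeriesFrom_le_of_lowerCentralSeries_le {K : Subgroup G} {d n : ℕ}
    (hd : (⊤ : Subgroup G).lowerCentralSeries d ≤ K) (hn : d ≤ n) (X : Subgroup G) :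
    X.lowerCentralSeriesFrom n ≤ K :=
  calc X.lowerCentralSeriesFrom n ≤ (⊤ : Subgroup G).lowerCentralSeriesFrom n :=
        lowerCentralSeriesFrom_mono le_top n
    _ = (⊤ : Subgroup G).lowerCentralSeries n := lowerCentralSeriesFrom_top n
    _ ≤ K := (lowerCentralSeries_antitone _ hn).trans hd

theorem lowerCentralSeriesFrom_sup_le (A B : Subgroup G) [A.Normal] [B.Normal] (n : ℕ) :
    (A ⊔ B).lowerCentralSeriesFrom n ≤ A.lowerCentralSeriesFrom n ⊔ B.lowerCentralSeriesFrom n := by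
  induction n with
  | zero => exact le_rfl
  | succ n ih =>
    simp only [lowerCentralSeriesFrom_succ]
    exact (commutator_mono ih le_rfl).trans (commutator_sup_le _ _ _)

theorem lowerCentralSeriesFrom_commutator_le {R : Subgroup G} (n : ℕ) (X Y : Subgroup G)
    [X.Normal] [Y.Normal]
    (h : ∀ p q, p + q = n → ⁅X.lowerCentralSeriesFrom p, Y.lowerCentralSeriesFrom q⁆ ≤ R) :
    ⁅X, Y⁆.lowerCentralSeriesFrom n ≤ R := by
  induction n generalizing X Y with
  | zero => exact h 0 0 rfl
  | succ n ih =>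
    have hsplit : ⁅⁅X, Y⁆, (⊤ : Subgroup G)⁆ ≤
        ⁅X, ⁅Y, (⊤ : Subgroup G)⁆⁆ ⊔ ⁅⁅X, (⊤ : Subgroup G)⁆, Y⁆ := by
      simpa only [commutator_comm _ X] using commutator_commutator_le_sup X Y ⊤
    rw [lowerCentralSeriesFrom_succ']
    refine (lowerCentralSeriesFrom_mono hsplit n).trans <|
      (lowerCentralSeriesFrom_sup_le _ _ n).trans (sup_le ?_ ?_)
    · exact ih X ⁅Y, ⊤⁆ fun p q hpq ↦ h p (q + 1) (by omega)
    · exact ih ⁅X, ⊤⁆ Y fun p q hpq ↦ h (p + 1) q (by omega)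

theorem lowerCentralSeriesFrom_lowerCentralSeries_le (N : Subgroup G) [N.Normal] {d : ℕ}
    (hd : (⊤ : Subgroup G).lowerCentralSeries d ≤ ⁅N, N⁆) (a : ℕ) {n : ℕ} (hn : d * (a + 1) ≤ n) :
    (N.lowerCentralSeries a).lowerCentralSeriesFrom n ≤ N.lowerCentralSeries (a + 1) := by
  induction a generalizing n with
  | zero => exact lowerCentralSeriesFrom_le_of_lowerCentralSeries_le hd (by omega) N
  | succ a ih =>
    rw [lowerCentralSeries_succ N a]
    refine lowerCentralSeriesFrom_commutator_le n _ _ fun p q hpq ↦ ?_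
    by_cases hp : d * (a + 1) ≤ p
    · exact commutator_mono (ih hp) (lowerCentralSeriesFrom_le_self N q)
    · have hq : N.lowerCentralSeriesFrom q ≤ N.lowerCentralSeries 1 :=
        lowerCentralSeriesFrom_le_of_lowerCentralSeries_le hd (by nlinarith) N
      exact (commutator_mono (lowerCentralSeriesFrom_le_self _ p) hq).trans
        (commutator_lowerCentralSeries_le N a 1)

theorem exists_lowerCentralSeries_le_lowerCentralSeries (N : Subgroup G) [N.Normal] {d : ℕ}
    (hd : (⊤ : Subgroup G).lowerCentralSeries d ≤ ⁅N, N⁆) (i : ℕ) :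
    ∃ m, (⊤ : Subgroup G).lowerCentralSeries m ≤ N.lowerCentralSeries i := by
  induction i with
  | zero => exact ⟨d, hd.trans (commutator_le_self N)⟩
  | succ i ih =>
    obtain ⟨m, hm⟩ := ih
    refine ⟨d * (i + 1) + m, ?_⟩
    rw [← lowerCentralSeriesFrom_top, lowerCentralSeriesFrom_add, lowerCentralSeriesFrom_top]
    exact (lowerCentralSeriesFrom_mono hm _).trans
      (lowerCentralSeriesFrom_lowerCentralSeries_le N hd i le_rfl)

/-- With `T = ⊥` this is P. Hall's nilpotency criterion. -/
theorem isNilpotent_quotient_of_lowerCentralSeries_le (N T : Subgroup G) [N.Normal] [T.Normal]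
    {c : ℕ} (hT : N.lowerCentralSeries c ≤ T) (hN : Group.IsNilpotent (G ⧸ ⁅N, N⁆)) :
    Group.IsNilpotent (G ⧸ T) := by
  set π := QuotientGroup.mk' T
  have hπ : Function.Surjective π := QuotientGroup.mk'_surjective T
  have : (N.map π).Normal := Normal.map inferInstance π hπ
  obtain ⟨d, hd⟩ := exists_lowerCentralSeries_le_of_isNilpotent_quotient hN
  have hd' : (⊤ : Subgroup (G ⧸ T)).lowerCentralSeries d ≤ ⁅N.map π, N.map π⁆ := by
    rw [← map_top_of_surjective π hπ, ← map_lowerCentralSeries, ← map_commutator]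
    exact map_mono hd
  obtain ⟨m, hm⟩ := exists_lowerCentralSeries_le_lowerCentralSeries (N.map π) hd' c
  rw [← map_lowerCentralSeries, map_mk'_eq_bot_of_le hT, le_bot_iff] at hm
  exact nilpotent_iff_lowerCentralSeries.mpr ⟨m, hm⟩

end Subgroup

theorem Monoid.isTorsionFree_quotient_iff {G : Type*} [Group G] (K : Subgroup G) [K.Normal] :
    Monoid.IsTorsionFree (G ⧸ K) ↔ ∀ x : G, ∀ n, 0 < n → x ^ n ∈ K → x ∈ K := by
  simp only [Monoid.IsTorsionFree, isOfFinOrder_iff_pow_eq_one]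
  constructor
  · intro h x n hn hxn
    by_contra hx
    exact h x (by rwa [Ne, QuotientGroup.eq_one_iff]) ⟨n, hn, (QuotientGroup.eq_one_iff _).mpr hxn⟩
  · rintro h ⟨x⟩ hx ⟨n, hn, hxn⟩
    exact hx ((QuotientGroup.eq_one_iff x).mpr (h x n hn ((QuotientGroup.eq_one_iff _).mp hxn)))

theorem Monoid.isTorsionFree_quotient_normalCore_map {G : Type*} [Group G] {H : Subgroup G}
    [H.Normal] {M : Subgroup H} [M.Normal] (hH : Monoid.IsTorsionFree (G ⧸ H))
    (hM : Monoid.IsTorsionFree (H ⧸ M)) :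
    Monoid.IsTorsionFree (G ⧸ (M.map H.subtype).normalCore) := by
  rw [isTorsionFree_quotient_iff] at hH hM ⊢
  intro x n hn hxn b
  have hxH : x ∈ H := hH x n hn (Subgroup.map_subtype_le M (Subgroup.normalCore_le _ hxn))
  let y : H := ⟨b * x * b⁻¹, Subgroup.Normal.conj_mem ‹_› x hxH b⟩
  have hyn : y ^ n ∈ M := by
    rw [← Subgroup.mem_map_iff_mem H.subtype_injective]
    simpa only [map_pow, Subgroup.subtype_apply, y, conj_pow] using hxn b
  exact Subgroup.mem_map_of_mem _ (hM y n hn hyn)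

/-- Proposition 1: if `G` has a normal subgroup `H` which is residually torsion-free
nilpotent, such that `G/H` is torsion-free nilpotent and `G/[H,H]` is nilpotent, then `G`
is residually torsion-free nilpotent. -/
theorem residuallyTorsionFreeNilpotent_of_normal (G : Type*) [Group G]
    (H : Subgroup G) [H.Normal]
    (hH : IsResiduallyTorsionFreeNilpotent H)
    (hq_tf : Monoid.IsTorsionFree (G ⧸ H)) (hq_nilp : Group.IsNilpotent (G ⧸ H))
    (hcomm : Group.IsNilpotent (G ⧸ (⁅H, H⁆ : Subgroup G))) :
    IsResiduallyTorsionFreeNilpotent G := by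
  intro g hg
  by_cases hgH : g ∈ H
  · obtain ⟨M, _, hgM, hM_tf, hM_nilp⟩ := hH ⟨g, hgH⟩ (by simpa using hg)
    obtain ⟨c, hc⟩ := Subgroup.exists_lowerCentralSeries_le_of_isNilpotent_quotient hM_nilp
    refine ⟨(M.map H.subtype).normalCore, inferInstance, fun hgT ↦ hgM ?_,
      Monoid.isTorsionFree_quotient_normalCore_map hq_tf hM_tf,
      Subgroup.isNilpotent_quotient_of_lowerCentralSeries_le H _ (c := c) ?_ hcomm⟩
    · exact (Subgroup.mem_map_iff_mem H.subtype_injective).mp (Subgroup.normalCore_le _ hgT)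
    · rw [Subgroup.normal_le_normalCore, ← Subgroup.top_subtype_lowerCentralSeries]
      exact Subgroup.map_mono hc
  · exact ⟨H, inferInstance, hgH, hq_tf, hq_nilp⟩
end

section
/- For every integer k > 1, the centralizer of the generator a in the Hydra group G(k,a,t) = ⟨a, t | [a, t, …, t] = 1⟩ (with k occurrences of t in the relator) is the cyclic subgroup generated by a. -/
open scoped commutatorElement

/-- The left-normed iterated commutator `[x, y₁, …, yₖ]`. -/
def leftComm {G : Type*} [Group G] (x : G) (l : List G) : G :=
  l.foldl (fun p q => ⁅p, q⁆) x

/-- The Hydra relator `[a, t, …, t]` with `k` occurrences of `t`, where `a` and `t` are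
the two generators of the free group on `Fin 2`. -/
def hydraRel (k : ℕ) : FreeGroup (Fin 2) :=
  leftComm (FreeGroup.of 0) (List.replicate k (FreeGroup.of 1))

/-!
Let `a_j = [a, t, …, t]` with `j` letters `t`, so that the relator says `a_k = 1` and conjugation
by `t` sends `a_j` to `a_{j+1}⁻¹ a_j`. On the free group `F` with basis `a_0, …, a_{k-1}` this rule
is an automorphism `θ` (its inverse sends `a_j` to `a_{k-1} ⋯ a_j`), and `G(k,a,t)` embeds in
`F ⋊_θ ℤ` with `a ↦ a_0` and `t` sent to the generator of `ℤ`; the map back is `a_j ↦ a_j`, `t ↦ t`.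
If `(w, n)` commutes with `a_0` then `a_0 w = w θⁿ(a_0)`. The exponent sum of `a_1` in `θⁿ(a_0)`
is `-n` (here `k ≥ 2` is used), so `n = 0`, and `w` commutes with the basis element `a_0` of `F`,
hence is a power of it.
-/

theorem leftComm_replicate_succ {G : Type*} [Group G] (x y : G) (n : ℕ) :
    leftComm x (List.replicate (n + 1) y) = ⁅leftComm x (List.replicate n y), y⁆ := by
  rw [List.replicate_succ', leftComm, List.foldl_append]
  rfl

theorem map_leftComm {G H : Type*} [Group G] [Group H] (f : G →* H) (x : G) (l : List G) :
    f (leftComm x l) = leftComm (f x) (l.map f) := by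
  induction l generalizing x with
  | nil => rfl
  | cons y l ih =>
    exact (ih ⁅x, y⁆).trans (congrArg (leftComm · _) (map_commutatorElement f x y))

namespace MulAut

variable {G H : Type*} [Group G] [Group H]

theorem semiconj_zpow {f : G → H} {σ : MulAut G} {τ : MulAut H} (h : Function.Semiconj f σ τ)
    (n : ℤ) : Function.Semiconj f ⇑(σ ^ n) ⇑(τ ^ n) := by
  have hinv : Function.Semiconj f ⇑σ⁻¹ ⇑τ⁻¹ :=
    h.inverses_right (apply_inv_self G σ) (inv_apply_self H τ)
  induction n using Int.induction_on with
  | zero => simpa only [zpow_zero, coe_one] using Function.Semiconj.id_right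
  | succ n ih => simpa only [zpow_add_one, coe_mul] using ih.comp_right h
  | pred n ih => simpa only [zpow_sub_one, coe_mul] using ih.comp_right hinv

theorem map_zpow_apply_of_map_apply_eq_mul_inv {M : Type*} [CommGroup M] {σ : MulAut G}
    {f g : G → M} (hf : ∀ x, f (σ x) = f x) (hg : ∀ x, g (σ x) = g x * (f x)⁻¹)
    (n : ℤ) (x : G) : g ((σ ^ n) x) = g x * (f x ^ n)⁻¹ := by
  induction n using Int.induction_on generalizing x with
  | zero => simp
  | succ n ih =>
    rw [zpow_add_one, mul_apply, ih, hg, hf, zpow_add_one]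
    group
  | pred n ih =>
    have hf' : f (σ⁻¹ x) = f x := by rw [← hf, apply_inv_self]
    have hg' : g (σ⁻¹ x) = g x * f x := by
      have := hg (σ⁻¹ x)
      rw [apply_inv_self, hf'] at this
      exact mul_inv_eq_iff_eq_mul.mp this.symm
    rw [zpow_sub_one, mul_apply, ih, hg', hf', zpow_sub_one]
    group

end MulAut

namespace FreeGroup

variable {α : Type*}

theorem mem_zpowers_of_commute_of {a : α} {w : FreeGroup α} (h : Commute w (of a)) :
    w ∈ Subgroup.zpowers (of a) := by
  classical
  suffices key : ∀ L : List (α × Bool), IsReduced L → Commute (mk L) (of a) →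
      mk L ∈ Subgroup.zpowers (of a) by
    simpa only [mk_toWord] using key w.toWord isReduced_toWord (by rwa [mk_toWord])
  intro L
  induction L with
  | nil => exact fun _ _ => Subgroup.one_mem _
  | cons x tl ih =>
    intro hred hc
    have hsplit : mk (x :: tl) = mk [x] * mk tl := by rw [mul_mk]; rfl
    by_cases hx : x.1 = a
    · obtain ⟨c, b⟩ := x
      obtain rfl : a = c := hx.symm
      have hxa : mk [(a, b)] ∈ Subgroup.zpowers (of a) := by
        cases b
        · exact Subgroup.inv_mem _ (Subgroup.mem_zpowers _)
        · exact Subgroup.mem_zpowers _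
      obtain ⟨n, hn⟩ := Subgroup.mem_zpowers_iff.mp hxa
      have htl : Commute (mk tl) (of a) := by
        have := ((Commute.refl (of a)).zpow_left n).inv_left.mul_left hc
        rwa [hn, hsplit, inv_mul_cancel_left] at this
      rw [hsplit]
      exact Subgroup.mul_mem _ hxa (ih (hred.infix (List.suffix_cons _ _).isInfix) htl)
    · -- `w = mk (x :: tl)` does not start with `a^{±1}`, so `a * w` is reduced as written; then
      -- `w * a`, a sublist of `w ++ [a]` of the same length, equals `a :: w`, and the first
      -- letters contradict `x.1 ≠ a`.
      exfalso
      have hleft : (of a * mk (x :: tl)).toWord = (a, true) :: x :: tl := by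
        rw [toWord_mul, toWord_of, toWord_mk, hred.reduce_eq, List.singleton_append,
          (isReduced_cons_cons.mpr ⟨fun h => absurd h.symm hx, hred⟩).reduce_eq]
      have hsub := toWord_mul_sublist (mk (x :: tl)) (of a)
      rw [hc.eq, hleft, toWord_mk, hred.reduce_eq, toWord_of] at hsub
      have := hsub.eq_of_length (by simp)
      simp only [List.cons_append, List.cons.injEq] at this
      exact hx (congrArg Prod.fst this.1).symm

def exponentSum [DecidableEq α] (a : α) : FreeGroup α →* Multiplicative ℤ :=
  lift (Pi.mulSingle a (.ofAdd 1))

theorem exponentSum_of [DecidableEq α] (a b : α) :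
    exponentSum a (of b) = if b = a then .ofAdd 1 else 1 :=
  (lift_apply_of).trans (Pi.mulSingle_apply a _ b)

end FreeGroup

namespace Hydra

open FreeGroup (exponentSum)
open SemidirectProduct

variable (k : ℕ)

/-- `a_j`, read as `1` for `j ≥ k`: this encodes the relation `a_k = 1`. -/
def gen (j : ℕ) : FreeGroup (Fin k) := if h : j < k then .of ⟨j, h⟩ else 1

theorem gen_val (j : Fin k) : gen k j = .of j := dif_pos j.isLt

theorem gen_of_le {j : ℕ} (h : k ≤ j) : gen k j = 1 := dif_neg (by omega)

def hydraMap : FreeGroup (Fin k) →* FreeGroup (Fin k) :=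
  FreeGroup.lift fun j => (gen k (j + 1))⁻¹ * .of j

theorem hydraMap_gen (j : ℕ) : hydraMap k (gen k j) = (gen k (j + 1))⁻¹ * gen k j := by
  by_cases h : j < k
  · simp only [gen, dif_pos h, hydraMap, FreeGroup.lift_apply_of]
  · rw [gen_of_le k (not_lt.mp h), gen_of_le k (by omega), map_one, inv_one, one_mul]

/-- `a_{k-1} a_{k-2} ⋯ a_j`, which `hydraMap` telescopes to `a_j`. -/
def tailProd (j : ℕ) : FreeGroup (Fin k) :=
  if j < k then tailProd (j + 1) * gen k j else 1
termination_by k - j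

theorem tailProd_of_lt {j : ℕ} (h : j < k) : tailProd k j = tailProd k (j + 1) * gen k j := by
  rw [tailProd, if_pos h]

theorem tailProd_of_le {j : ℕ} (h : k ≤ j) : tailProd k j = 1 := by
  rw [tailProd, if_neg (by omega)]

theorem hydraMap_tailProd (j : ℕ) : hydraMap k (tailProd k j) = gen k j := by
  by_cases h : j < k
  · rw [tailProd_of_lt k h, map_mul, hydraMap_tailProd (j + 1), hydraMap_gen, mul_inv_cancel_left]
  · rw [tailProd_of_le k (not_lt.mp h), map_one, gen_of_le k (not_lt.mp h)]
termination_by k - j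

def hydraMapInv : FreeGroup (Fin k) →* FreeGroup (Fin k) :=
  FreeGroup.lift fun j => tailProd k j

theorem hydraMapInv_gen (j : ℕ) : hydraMapInv k (gen k j) = tailProd k j := by
  by_cases h : j < k
  · simp only [gen, dif_pos h, hydraMapInv, FreeGroup.lift_apply_of]
  · rw [gen_of_le k (not_lt.mp h), map_one, tailProd_of_le k (not_lt.mp h)]

theorem hydraMapInv_comp_hydraMap : (hydraMapInv k).comp (hydraMap k) = MonoidHom.id _ :=
  FreeGroup.ext_hom _ _ fun j => by
    rw [MonoidHom.comp_apply, MonoidHom.id_apply, ← gen_val, hydraMap_gen, map_mul, map_inv,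
      hydraMapInv_gen, hydraMapInv_gen, tailProd_of_lt k j.isLt, inv_mul_cancel_left]

theorem hydraMap_comp_hydraMapInv : (hydraMap k).comp (hydraMapInv k) = MonoidHom.id _ :=
  FreeGroup.ext_hom _ _ fun j => by
    rw [MonoidHom.comp_apply, MonoidHom.id_apply, ← gen_val, hydraMapInv_gen, hydraMap_tailProd]

def hydraAut : MulAut (FreeGroup (Fin k)) :=
  (hydraMap k).toMulEquiv (hydraMapInv k) (hydraMapInv_comp_hydraMap k)
    (hydraMap_comp_hydraMapInv k)

theorem hydraAut_apply (x : FreeGroup (Fin k)) : hydraAut k x = hydraMap k x := rfl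


theorem exponentSum_gen (i : Fin k) (j : ℕ) :
    exponentSum i (gen k j) = if j = i then .ofAdd 1 else 1 := by
  by_cases h : j < k
  · rw [gen, dif_pos h, FreeGroup.exponentSum_of]
    simp only [Fin.ext_iff]
  · rw [gen_of_le k (not_lt.mp h), map_one, if_neg (by have := i.isLt; omega)]

theorem exponentSum_zero_hydraAut (hk : 0 < k) (x : FreeGroup (Fin k)) :
    exponentSum ⟨0, hk⟩ (hydraAut k x) = exponentSum ⟨0, hk⟩ x := by
  rw [hydraAut_apply]
  refine DFunLike.congr_fun (FreeGroup.ext_hom ((exponentSum _).comp (hydraMap k)) _ fun j => ?_) x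
  rw [MonoidHom.comp_apply, ← gen_val, hydraMap_gen, map_mul, map_inv, exponentSum_gen,
    if_neg (by simp), inv_one, one_mul]

theorem exponentSum_one_hydraAut (hk : 1 < k) (x : FreeGroup (Fin k)) :
    exponentSum ⟨1, hk⟩ (hydraAut k x) =
      exponentSum ⟨1, hk⟩ x * (exponentSum ⟨0, by omega⟩ x)⁻¹ := by
  rw [hydraAut_apply]
  refine DFunLike.congr_fun (FreeGroup.ext_hom ((exponentSum _).comp (hydraMap k))
    (exponentSum _ * (exponentSum _)⁻¹) fun j => ?_) x
  rw [MonoidHom.comp_apply, MonoidHom.mul_apply, MonoidHom.inv_apply, ← gen_val, hydraMap_gen,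
    map_mul, map_inv, exponentSum_gen, exponentSum_gen, exponentSum_gen, mul_comm]
  simp

theorem exponentSum_one_hydraAut_zpow_gen_zero (hk : 1 < k) (n : ℤ) :
    exponentSum ⟨1, hk⟩ ((hydraAut k ^ n) (gen k 0)) = .ofAdd (-n) := by
  rw [MulAut.map_zpow_apply_of_map_apply_eq_mul_inv (exponentSum_zero_hydraAut k (by omega))
    (exponentSum_one_hydraAut k hk), exponentSum_gen, exponentSum_gen]
  simp [← ofAdd_zsmul]

def hydraAction : Multiplicative ℤ →* MulAut (FreeGroup (Fin k)) := zpowersHom _ (hydraAut k)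

abbrev FreeByCyclic := FreeGroup (Fin k) ⋊[hydraAction k] Multiplicative ℤ

theorem commutatorElement_inl_inr_ofAdd_one (x : FreeGroup (Fin k)) :
    ⁅(inl x : FreeByCyclic k), (inr (Multiplicative.ofAdd 1) : FreeByCyclic k)⁆ =
      inl (x * (hydraMap k x)⁻¹) := by
  rw [commutatorElement_def, ← map_inv inl, ← map_inv inr, mul_assoc, mul_assoc,
    ← mul_assoc (inr _), ← inl_aut, ← map_mul]
  simp [hydraAction, hydraAut_apply]

theorem leftComm_inl_inr_replicate (j : ℕ) :
    leftComm (inl (gen k 0) : FreeByCyclic k)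
      (List.replicate j (inr (Multiplicative.ofAdd (1 : ℤ)))) = inl (gen k j) := by
  induction j with
  | zero => rfl
  | succ j ih =>
    rw [leftComm_replicate_succ, ih, commutatorElement_inl_inr_ofAdd_one, hydraMap_gen]
    group

abbrev HydraGroup := PresentedGroup ({hydraRel k} : Set (FreeGroup (Fin 2)))

def toFreeByCyclic : HydraGroup k →* FreeByCyclic k :=
  PresentedGroup.toGroup (f := ![inl (gen k 0), inr (Multiplicative.ofAdd (1 : ℤ))]) <| by
    rintro r rfl
    simp only [hydraRel, map_leftComm, List.map_replicate, FreeGroup.lift_apply_of]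
    simpa [gen_of_le] using leftComm_inl_inr_replicate k k

def hydraGen (j : ℕ) : HydraGroup k := leftComm (.of 0) (List.replicate j (.of 1))

theorem hydraGen_zero : hydraGen k 0 = .of 0 := rfl

theorem hydraGen_self : hydraGen k k = 1 := by
  have : PresentedGroup.mk _ (hydraRel k) = hydraGen k k :=
    (map_leftComm _ _ _).trans (by rw [List.map_replicate]; rfl)
  rw [← this, PresentedGroup.mk_eq_one_iff]
  exact Subgroup.subset_normalClosure rfl

theorem conj_hydraGen (j : ℕ) :
    .of 1 * hydraGen k j * (.of 1)⁻¹ = (hydraGen k (j + 1))⁻¹ * hydraGen k j := by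
  rw [hydraGen, hydraGen, leftComm_replicate_succ, commutatorElement_def]
  group

def fromFree : FreeGroup (Fin k) →* HydraGroup k := FreeGroup.lift fun j => hydraGen k j

theorem fromFree_gen {j : ℕ} (hj : j ≤ k) : fromFree k (gen k j) = hydraGen k j := by
  by_cases h : j < k
  · rw [gen, dif_pos h, fromFree, FreeGroup.lift_apply_of]
  · rw [show j = k by omega, gen_of_le k le_rfl, map_one, hydraGen_self]

theorem fromFree_hydraAut (x : FreeGroup (Fin k)) :
    fromFree k (hydraAut k x) = MulAut.conj (.of 1) (fromFree k x) := by
  refine DFunLike.congr_fun (FreeGroup.ext_hom ((fromFree k).comp (hydraAut k).toMonoidHom)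
    ((MulAut.conj (.of 1)).toMonoidHom.comp (fromFree k)) fun j => ?_) x
  simp only [MonoidHom.comp_apply, MulEquiv.coe_toMonoidHom, hydraAut_apply, ← gen_val]
  rw [hydraMap_gen, map_mul, map_inv, fromFree_gen k j.isLt, fromFree_gen k j.isLt.le,
    MulAut.conj_apply, conj_hydraGen]

def ofFreeByCyclic : FreeByCyclic k →* HydraGroup k :=
  SemidirectProduct.lift (fromFree k) (zpowersHom _ (.of 1)) fun n => by
    refine MonoidHom.ext fun x => ?_
    simpa [hydraAction, map_zpow] using
      MulAut.semiconj_zpow (fromFree_hydraAut k) n.toAdd x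

theorem toFreeByCyclic_of_zero : toFreeByCyclic k (.of 0) = inl (gen k 0) :=
  PresentedGroup.toGroup.of _

theorem ofFreeByCyclic_inl_gen_zero : ofFreeByCyclic k (inl (gen k 0)) = .of 0 := by
  rw [ofFreeByCyclic, lift_inl, fromFree_gen k (Nat.zero_le k), hydraGen_zero]

theorem ofFreeByCyclic_toFreeByCyclic (x : HydraGroup k) :
    ofFreeByCyclic k (toFreeByCyclic k x) = x := by
  refine DFunLike.congr_fun (PresentedGroup.ext (φ := (ofFreeByCyclic k).comp (toFreeByCyclic k))
    (ψ := MonoidHom.id _) fun i => ?_) x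
  fin_cases i
  · exact (congrArg (ofFreeByCyclic k) (toFreeByCyclic_of_zero k)).trans
      (ofFreeByCyclic_inl_gen_zero k)
  · simp [toFreeByCyclic, ofFreeByCyclic]

theorem mem_zpowers_of_commute_inl_gen_zero (hk : 1 < k) {x : FreeByCyclic k}
    (h : Commute x (inl (gen k 0))) : x ∈ Subgroup.zpowers (inl (gen k 0)) := by
  have hleft : gen k 0 * x.left = x.left * (hydraAut k ^ x.right.toAdd) (gen k 0) := by
    have := congrArg SemidirectProduct.left h.eq.symm
    rwa [mul_left, mul_left, left_inl, right_inl, map_one, MulAut.one_apply] at this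
  have hright : x.right = 1 := by
    have := congrArg (exponentSum ⟨1, hk⟩) hleft
    rw [map_mul, map_mul, exponentSum_one_hydraAut_zpow_gen_zero, exponentSum_gen, if_neg (by simp),
      one_mul, left_eq_mul] at this
    simpa using this
  have hcomm : Commute x.left (gen k 0) := by
    rw [hright, toAdd_one, zpow_zero, MulAut.one_apply] at hleft
    exact hleft.symm
  rw [← inl_left_mul_inr_right x, hright, map_one, mul_one, ← MonoidHom.map_zpowers]
  refine Subgroup.mem_map_of_mem _ ?_
  rw [gen, dif_pos (by omega)] at hcomm ⊢
  exact FreeGroup.mem_zpowers_of_commute_of hcomm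

end Hydra

open Hydra SemidirectProduct

/-- Lemma 1: for `k > 1`, the centralizer of the generator `a` in the Hydra group
`G(k,a,t)` is the cyclic subgroup generated by `a`. -/
theorem hydra_centralizer_eq_zpowers (k : ℕ) (hk : 1 < k) :
    Subgroup.centralizer
        {(PresentedGroup.of 0 : PresentedGroup ({hydraRel k} : Set (FreeGroup (Fin 2))))} =
      Subgroup.zpowers
        (PresentedGroup.of 0 : PresentedGroup ({hydraRel k} : Set (FreeGroup (Fin 2)))) := by
  refine le_antisymm (fun x hx => ?_)
    (Subgroup.zpowers_le.mpr (Subgroup.mem_centralizer_singleton_iff.mpr rfl))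
  have hcomm : Commute (toFreeByCyclic k x) (inl (gen k 0)) := by
    rw [← toFreeByCyclic_of_zero]
    exact Commute.map (Subgroup.mem_centralizer_singleton_iff.mp hx) (toFreeByCyclic k)
  have := Subgroup.mem_map_of_mem (ofFreeByCyclic k)
    (mem_zpowers_of_commute_inl_gen_zero k hk hcomm)
  rwa [MonoidHom.map_zpowers, ofFreeByCyclic_toFreeByCyclic, ofFreeByCyclic_inl_gen_zero] at this
end
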